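/- arXiv:math/0110041 — 3 statements merged into one kernel-verified Lean document; each statement's English description precedes it below -/
import Mathlib

section
/- If g is a finite-dimensional perfect Lie algebra of dimension n (i.e. [g,g] = g), then there exist elements Y_1,…,Y_n ∈ g and linear maps σ_1,…,σ_n : g → g such that [σ_1(X),Y_1] + ⋯ + [σ_n(X),Y_n] = X for all X ∈ g; that is, N_g ≤ dim g. -/
/-! Since the brackets span `g`, some `n = dim g` of them, `⁅aᵢ, cᵢ⁆`, form a basis. Taking
`Yᵢ = cᵢ` and `σᵢ X = xᵢ • aᵢ`, where `xᵢ` is the `i`-th coordinate of `X` in that basis, gives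
`∑ ⁅σᵢ X, Yᵢ⁆ = ∑ xᵢ • ⁅aᵢ, cᵢ⁆ = X`. -/

open Module

theorem Module.exists_finBasis_range_subset {K V : Type*} [DivisionRing K] [AddCommGroup V]
    [Module K V] [Module.Finite K V] {s : Set V} (hs : Submodule.span K s = ⊤) :
    ∃ b : Basis (Fin (finrank K V)) K V, Set.range b ⊆ s := by
  let b := Basis.ofSpan hs.ge
  exact ⟨b.reindex (b.indexEquiv (finBasis K V)), by
    rw [Basis.range_reindex]; exact Basis.ofSpan_subset hs.ge⟩

theorem Module.Basis.sum_lie_coord_smulRight {R L ι : Type*} [CommRing R] [LieRing L]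
    [LieAlgebra R L] [Fintype ι] (b : Basis ι R L) (a c : ι → L) (h : ∀ i, b i = ⁅a i, c i⁆)
    (X : L) : ∑ i, ⁅(b.coord i).smulRight (a i) X, c i⁆ = X := by
  simp only [LinearMap.smulRight_apply, smul_lie, ← h, Basis.coord_apply]
  exact b.sum_repr X

/-- If `g` is a finite-dimensional perfect Lie algebra (`[g,g] = g`) of dimension `n`, then
there exist `Y₁,…,Yₙ ∈ g` and linear maps `σ₁,…,σₙ : g → g` with
`⁅σ₁ X, Y₁⁆ + ⋯ + ⁅σₙ X, Yₙ⁆ = X` for all `X`; that is, `N_g ≤ dim g`. -/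
theorem stmt_2 (k : Type*) [Field k] (g : Type*) [LieRing g] [LieAlgebra k g]
    [Module.Finite k g]
    (hperf : Submodule.span k {x : g | ∃ a b : g, x = ⁅a, b⁆} = ⊤)
    (n : ℕ) (hn : n = Module.finrank k g) :
    ∃ (Y : Fin n → g) (σ : Fin n → (g →ₗ[k] g)),
      ∀ X : g, ∑ i, ⁅σ i X, Y i⁆ = X := by
  subst hn
  obtain ⟨b, hb⟩ := exists_finBasis_range_subset hperf
  choose a c hac using fun i => hb (Set.mem_range_self i)
  exact ⟨c, fun i => (b.coord i).smulRight (a i), b.sum_lie_coord_smulRight a c hac⟩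
end

section
/- Let g be a real compact semisimple Lie algebra (the Lie algebra of a compact semisimple Lie group). Then there exist Y_1, Y_2 ∈ g such that ad_{Y_1}(g) + ad_{Y_2}(g) = g; i.e. N_g ≤ 2. -/
/-!
The negative of the Killing form is an ad-invariant inner product, so each `ad Y` is skew-adjoint
and `(range (ad Y))ᗮ = ker (ad Y)`; it suffices to find `Y₁`, `Y₂` whose centralizers meet
trivially.

A commuting family of skew-adjoint operators has only finitely many kernels: each is a sum of joint
eigenspaces of the symmetric squares. Take `Y₁` whose centralizer `H` has minimal dimension. For
`Z ∈ H`, two distinct values of `t` give the same kernel of `ad Y₁ + t • ad Z`, which therefore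
lies in `ker (ad Y₁) ⊓ ker (ad Z)`; minimality forces `H ≤ ker (ad Z)`, so `H` is abelian.
Choosing `Y₂` outside the finitely many proper kernels of `ad Z`, `Z ∈ H`, any `Z ∈ H`
centralizing `Y₂` has `ad Z = 0`, hence `Z = 0` by semisimplicity.
-/

open Module LinearMap Submodule Module.End LieAlgebra
open scoped RealInnerProductSpace InnerProductSpace Function

section Symmetric

variable {𝕜 E ι : Type*} [RCLike 𝕜] [NormedAddCommGroup E] [InnerProductSpace 𝕜 E]

theorem LinearMap.IsSymmetric.ker_isOrtho_eigenspace {S : Module.End 𝕜 E} (hS : S.IsSymmetric)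
    {μ : 𝕜} (hμ : μ ≠ 0) : ker S ⟂ eigenspace S μ := by
  rw [← eigenspace_zero]
  exact hS.orthogonalFamily_eigenspaces.isOrtho hμ.symm

variable [FiniteDimensional 𝕜 E] {T : ι → Module.End 𝕜 E}

theorem LinearMap.IsSymmetric.ker_eq_iSup_iInf_eigenspace_of_commute
    (hT : ∀ i, (T i).IsSymmetric) (hC : Pairwise (Commute on T)) (i : ι) :
    ker (T i) = ⨆ (χ : ι → 𝕜) (_ : χ i = 0), ⨅ j, eigenspace (T j) (χ j) := by
  set E' : (ι → 𝕜) → Submodule 𝕜 E := fun χ ↦ ⨅ j, eigenspace (T j) (χ j)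
  have hle (χ : ι → 𝕜) : E' χ ≤ eigenspace (T i) (χ i) := iInf_le _ i
  have hzero : ⨆ (χ) (_ : χ i = 0), E' χ ≤ ker (T i) :=
    iSup₂_le fun χ hχ ↦ by simpa [hχ, eigenspace_zero] using hle χ
  have hortho : ker (T i) ⟂ ⨆ (χ) (_ : ¬χ i = 0), E' χ :=
    isOrtho_iSup_right.2 fun χ ↦ isOrtho_iSup_right.2 fun hχ ↦
      ((hT i).ker_isOrtho_eigenspace hχ).mono_right (hle χ)
  calc ker (T i)
      = ((⨆ (χ) (_ : χ i = 0), E' χ) ⊔ ⨆ (χ) (_ : ¬χ i = 0), E' χ) ⊓ ker (T i) := by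
        rw [← iSup_split, IsSymmetric.iSup_iInf_eq_top_of_commute hT hC, top_inf_eq]
    _ = (⨆ (χ) (_ : χ i = 0), E' χ) ⊔ (ker (T i) ⊓ ⨆ (χ) (_ : ¬χ i = 0), E' χ) := by
        rw [sup_inf_assoc_of_le _ hzero, inf_comm]
    _ = ⨆ (χ) (_ : χ i = 0), E' χ := by
        rw [hortho.disjoint.eq_bot, sup_bot_eq]

theorem LinearMap.IsSymmetric.finite_range_ker_of_commute
    (hT : ∀ i, (T i).IsSymmetric) (hC : Pairwise (Commute on T)) :
    (Set.range fun i ↦ ker (T i)).Finite := by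
  set E' : (ι → 𝕜) → Submodule 𝕜 E := fun χ ↦ ⨅ j, eigenspace (T j) (χ j)
  have hF : {χ | E' χ ≠ ⊥}.Finite := Submodule.finite_ne_bot_of_iSupIndep
    (IsSymmetric.orthogonalFamily_iInf_eigenspaces hT).independent
  refine (hF.powerset.image fun s ↦ ⨆ χ ∈ s, E' χ).subset ?_
  rintro _ ⟨i, rfl⟩
  refine ⟨{χ | E' χ ≠ ⊥ ∧ χ i = 0}, fun χ hχ ↦ hχ.1, ?_⟩
  change _ = ker (T i)
  rw [IsSymmetric.ker_eq_iSup_iInf_eigenspace_of_commute hT hC i]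
  refine le_antisymm (iSup₂_le fun χ hχ ↦ le_iSup₂_of_le χ hχ.2 le_rfl) (iSup₂_le fun χ hχ ↦ ?_)
  by_cases h : E' χ = ⊥
  · exact h.le.trans bot_le
  · exact le_biSup E' (show χ ∈ {χ | E' χ ≠ ⊥ ∧ χ i = 0} from ⟨h, hχ⟩)

end Symmetric

section Skew

variable {E ι : Type*} [NormedAddCommGroup E] [InnerProductSpace ℝ E]

theorem isSymmetric_mul_self_of_skew {A : Module.End ℝ E} (hA : ∀ x y, ⟪A x, y⟫ = -⟪x, A y⟫) :
    (A * A).IsSymmetric := fun x y ↦ by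
  simp only [Module.End.mul_apply, hA, neg_neg]

theorem ker_mul_self_of_skew {A : Module.End ℝ E} (hA : ∀ x y, ⟪A x, y⟫ = -⟪x, A y⟫) :
    ker (A * A) = ker A := by
  refine le_antisymm (fun x hx ↦ ?_) (ker_le_ker_comp A A)
  have : ⟪A x, A x⟫ = 0 := by rw [hA, ← Module.End.mul_apply, hx, inner_zero_right, neg_zero]
  exact inner_self_eq_zero.1 this

theorem orthogonal_range_of_skew {A : Module.End ℝ E} (hA : ∀ x y, ⟪A x, y⟫ = -⟪x, A y⟫) :
    (range A)ᗮ = ker A := by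
  ext x
  simp only [mem_orthogonal, mem_ker, mem_range, forall_exists_index, forall_apply_eq_imp_iff,
    hA, neg_eq_zero]
  exact ⟨fun h ↦ inner_self_eq_zero.1 (h (A x)), fun h y ↦ by rw [h, inner_zero_right]⟩

variable [FiniteDimensional ℝ E]

theorem finite_range_ker_of_skew_of_commute {A : ι → Module.End ℝ E}
    (hA : ∀ i x y, ⟪A i x, y⟫ = -⟪x, A i y⟫) (hC : ∀ i j, Commute (A i) (A j)) :
    (Set.range fun i ↦ ker (A i)).Finite := by
  simp_rw [← ker_mul_self_of_skew (hA _)]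
  exact IsSymmetric.finite_range_ker_of_commute (fun i ↦ isSymmetric_mul_self_of_skew (hA i))
    fun i j _ ↦ ((hC i j).mul_left (hC i j)).mul_right ((hC i j).mul_left (hC i j))

theorem exists_ker_add_smul_le_of_skew {A B : Module.End ℝ E}
    (hA : ∀ x y, ⟪A x, y⟫ = -⟪x, A y⟫) (hB : ∀ x y, ⟪B x, y⟫ = -⟪x, B y⟫) (hAB : Commute A B) :
    ∃ t : ℝ, ker (A + t • B) ≤ ker A ⊓ ker B := by
  have hfin := finite_range_ker_of_skew_of_commute (A := fun t : ℝ ↦ A + t • B)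
    (fun t x y ↦ by
      simp only [LinearMap.add_apply, LinearMap.smul_apply, inner_add_left, inner_add_right,
        real_inner_smul_left, real_inner_smul_right, hA x y, hB x y]
      ring)
    fun s t ↦ ((Commute.refl A).add_right (hAB.smul_right t)).add_left
      ((hAB.symm.add_right ((Commute.refl B).smul_right t)).smul_left s)
  have := hfin.to_subtype
  obtain ⟨s, t, hst, hker⟩ := Finite.exists_ne_map_eq_of_infinite (Set.rangeFactorization
    (fun t : ℝ ↦ ker (A + t • B)))
  refine ⟨s, fun x hxs ↦ ?_⟩
  have hker' : ker (A + s • B) = ker (A + t • B) := congrArg Subtype.val hker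
  have hxt : x ∈ ker (A + t • B) := hker' ▸ hxs
  rw [mem_ker, LinearMap.add_apply, LinearMap.smul_apply] at hxs hxt
  have hBx : B x = 0 := by
    have : (s - t) • B x = 0 := by
      rw [sub_smul, ← add_sub_add_left_eq_sub _ _ (A x), hxs, hxt, sub_zero]
    exact (smul_eq_zero.1 this).resolve_left (sub_ne_zero.2 hst)
  refine ⟨?_, hBx⟩
  rwa [hBx, smul_zero, add_zero] at hxs

theorem exists_forall_apply_eq_zero_imp_of_skew_of_commute {A : ι → Module.End ℝ E}
    (hA : ∀ i x y, ⟪A i x, y⟫ = -⟪x, A i y⟫) (hC : ∀ i j, Commute (A i) (A j)) :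
    ∃ v : E, ∀ i, A i v = 0 → A i = 0 := by
  have := ((finite_range_ker_of_skew_of_commute hA hC).subset
    (Set.inter_subset_left (t := {p | p ≠ ⊤}))).to_subtype
  by_contra! h
  obtain ⟨⟨p, hp⟩, hp_top⟩ := Subspace.exists_eq_top_of_iUnion_eq_univ
    (p := fun p : ↥((Set.range fun i ↦ ker (A i)) ∩ {p | p ≠ ⊤}) ↦ (p : Submodule ℝ E))
    (Set.eq_univ_of_forall fun v ↦ by
      obtain ⟨i, hiv, hi⟩ := h v
      exact Set.mem_iUnion.2 ⟨⟨ker (A i), ⟨i, rfl⟩, mt ker_eq_top.1 hi⟩, hiv⟩)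
  exact hp.2 hp_top

theorem sup_range_eq_top_of_skew {A B : Module.End ℝ E} (hA : ∀ x y, ⟪A x, y⟫ = -⟪x, A y⟫)
    (hB : ∀ x y, ⟪B x, y⟫ = -⟪x, B y⟫) (h : ker A ⊓ ker B = ⊥) : range A ⊔ range B = ⊤ := by
  rw [← orthogonal_eq_bot_iff, ← inf_orthogonal, orthogonal_range_of_skew hA,
    orthogonal_range_of_skew hB, h]

theorem ker_le_ker_of_forall_finrank_ker_le {g : Type*} [AddCommGroup g] [Module ℝ g]
    (φ : g →ₗ[ℝ] Module.End ℝ E) (hφ : ∀ Y x y, ⟪φ Y x, y⟫ = -⟪x, φ Y y⟫) {Y₁ : g}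
    (hY₁ : ∀ Y, finrank ℝ (ker (φ Y₁)) ≤ finrank ℝ (ker (φ Y))) {Z : g}
    (hZ : Commute (φ Y₁) (φ Z)) : ker (φ Y₁) ≤ ker (φ Z) := by
  obtain ⟨t, ht⟩ := exists_ker_add_smul_le_of_skew (hφ Y₁) (hφ Z) hZ
  have hmin := hY₁ (Y₁ + t • Z)
  rw [map_add, map_smul] at hmin
  exact inf_eq_left.1 (eq_of_le_of_finrank_le inf_le_left (hmin.trans (finrank_mono ht)))

end Skew

noncomputable abbrev negKillingFormCore {g : Type*} [LieRing g] [LieAlgebra ℝ g]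
    [FiniteDimensional ℝ g] (h : ∀ x : g, x ≠ 0 → killingForm ℝ g x x < 0) :
    InnerProductSpace.Core ℝ g where
  inner x y := -killingForm ℝ g x y
  conj_inner_symm x y := by simp [LieModule.traceForm_comm]
  re_inner_nonneg x := by
    rcases eq_or_ne x 0 with rfl | hx
    · simp
    · simpa using (h x hx).le
  definite x hx := by
    by_contra hx0
    exact (h x hx0).ne (neg_eq_zero.1 hx)
  add_left x y z := by simp only [map_add, LinearMap.add_apply, neg_add]
  smul_left x y r := by simp [mul_neg]

theorem commute_ad_of_lie_eq_zero {R L : Type*} [CommRing R] [LieRing L] [LieAlgebra R L]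
    {x y : L} (h : ⁅x, y⁆ = 0) : Commute (ad R L x) (ad R L y) := by
  refine LinearMap.ext fun z ↦ ?_
  simp only [Module.End.mul_apply, ad_apply]
  rw [leibniz_lie, h, zero_lie, zero_add]

/-- Let `g` be a real compact semisimple Lie algebra (semisimple with negative definite
Killing form).  Then there exist `Y₁, Y₂ ∈ g` with `ad_{Y₁}(g) + ad_{Y₂}(g) = g`;
i.e. `N_g ≤ 2`. -/
theorem stmt_14 (g : Type*) [LieRing g] [LieAlgebra ℝ g] [FiniteDimensional ℝ g]
    [LieAlgebra.IsSemisimple ℝ g]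
    (hcompact : ∀ x : g, x ≠ 0 → killingForm ℝ g x x < 0) :
    ∃ Y₁ Y₂ : g,
      LinearMap.range (LieAlgebra.ad ℝ g Y₁) ⊔ LinearMap.range (LieAlgebra.ad ℝ g Y₂) = ⊤ := by
  let core := negKillingFormCore hcompact
  let _ : NormedAddCommGroup g := core.toNormedAddCommGroup
  let _ : InnerProductSpace ℝ g := InnerProductSpace.ofCore core.toCore
  let _ : LieRing (Module.End ℝ g) := LieRing.ofAssociativeRing
  have hskew (Y x y : g) : ⟪ad ℝ g Y x, y⟫ = -⟪x, ad ℝ g Y y⟫ := by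
    simp only [ad_apply]
    exact congrArg Neg.neg (LieModule.traceForm_apply_lie_apply' ℝ g g Y x y)
  obtain ⟨Y₁, hY₁⟩ : ∃ Y₁ : g, ∀ Y, finrank ℝ (ker (ad ℝ g Y₁)) ≤ finrank ℝ (ker (ad ℝ g Y)) :=
    ⟨_, fun Y ↦ Function.argmin_le (fun Y : g ↦ finrank ℝ (ker (ad ℝ g Y))) Y⟩
  have hH (Z : g) (hZ : Z ∈ ker (ad ℝ g Y₁)) : ker (ad ℝ g Y₁) ≤ ker (ad ℝ g Z) :=
    ker_le_ker_of_forall_finrank_ker_le (ad ℝ g).toLinearMap hskew hY₁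
      (commute_ad_of_lie_eq_zero hZ)
  obtain ⟨Y₂, hY₂⟩ := exists_forall_apply_eq_zero_imp_of_skew_of_commute
    (A := fun Z : ker (ad ℝ g Y₁) ↦ ad ℝ g Z) (fun Z ↦ hskew Z)
    fun Z W ↦ commute_ad_of_lie_eq_zero (hH Z Z.2 W.2)
  refine ⟨Y₁, Y₂, sup_range_eq_top_of_skew (hskew Y₁) (hskew Y₂) (eq_bot_iff.2 ?_)⟩
  rintro x ⟨hx₁, hx₂ : ⁅Y₂, x⁆ = 0⟩
  have hx : ad ℝ g x = 0 := hY₂ ⟨x, hx₁⟩ (by rw [ad_apply, ← lie_skew, hx₂, neg_zero])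
  exact (Submodule.mem_bot ℝ).2 <|
    LieModule.IsFaithful.injective_toEnd (R := ℝ) (L := g) (M := g) (hx.trans (map_zero _).symm)
end

section
/- Let G₁, G₂ be topological groups, and suppose for i = 1,2 there exist N_i ∈ ℕ such that for every identity neighborhood U_i ⊆ G_i there are h ∈ U_i^{N_i} making (g_1,…,g_{N_i}) ↦ [g_1,h_1]⋯[g_{N_i},h_{N_i}] locally right-invertible near e by a continuous map sending e to (e,…,e). Then the product group G₁ × G₂ satisfies the same property with N ≤ N₁ + N₂. -/
/-!
Pull `U` back to each factor along the inclusions `G₁ → G₁ × G₂ ← G₂` and concatenate the two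
tuples `h` and the two local right inverses. The inclusions are homomorphisms, so the commutator
product over the concatenated tuple is the image of the `G₁`-product times the image of the
`G₂`-product, i.e. `(g₁, 1) * (1, g₂) = (g₁, g₂)`.
-/

open Topology
open scoped commutatorElement

/-- The local-commutator-decomposition property of a topological group: for every identity
neighborhood `U` there are `h₁,…,h_N ∈ U` such that
`(g₁,…,g_N) ↦ [g₁,h₁]⋯[g_N,h_N]` has a continuous local right inverse near `e`
sending `e` to `(e,…,e)`. -/
def LocallySmoothlyPerfect (G : Type*) [Group G] [TopologicalSpace G] (N : ℕ) : Prop :=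
  ∀ U ∈ 𝓝 (1 : G), ∃ h : Fin N → G, (∀ i, h i ∈ U) ∧
    ∃ V ∈ 𝓝 (1 : G), ∃ S : G → (Fin N → G),
      ContinuousOn S V ∧ S 1 = (fun _ => 1) ∧
      ∀ g ∈ V, (List.ofFn fun i => ⁅S g i, h i⁆).prod = g

theorem List.prod_ofFn_commutatorElement_append {G : Type*} [Group G] {m n : ℕ}
    (x h : Fin m → G) (y k : Fin n → G) :
    (List.ofFn fun i => ⁅Fin.append x y i, Fin.append h k i⁆).prod =
      (List.ofFn fun i => ⁅x i, h i⁆).prod * (List.ofFn fun j => ⁅y j, k j⁆).prod := by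
  rw [← List.prod_append, ← List.ofFn_fin_append]
  congr 2
  funext i
  refine Fin.addCases (fun i => ?_) (fun j => ?_) i <;> simp

theorem map_prod_ofFn_commutatorElement {G H F : Type*} [Group G] [Group H] [FunLike F G H]
    [MonoidHomClass F G H] (f : F) {n : ℕ} (x h : Fin n → G) :
    f (List.ofFn fun i => ⁅x i, h i⁆).prod = (List.ofFn fun i => ⁅f (x i), f (h i)⁆).prod := by
  simp only [map_list_prod, List.map_ofFn, Function.comp_def, map_commutatorElement]

theorem stmt_19_general (G₁ G₂ : Type*) [Group G₁] [TopologicalSpace G₁]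
    [Group G₂] [TopologicalSpace G₂] (N₁ N₂ : ℕ)
    (h₁ : LocallySmoothlyPerfect G₁ N₁) (h₂ : LocallySmoothlyPerfect G₂ N₂) :
    LocallySmoothlyPerfect (G₁ × G₂) (N₁ + N₂) := by
  intro U hU
  let ι₁ := MonoidHom.inl G₁ G₂
  let ι₂ := MonoidHom.inr G₁ G₂
  obtain ⟨a, ha, V₁, hV₁, S₁, hS₁c, hS₁1, hS₁⟩ :=
    h₁ (ι₁ ⁻¹' U) ((Continuous.prodMk_left 1).continuousAt.preimage_mem_nhds hU)
  obtain ⟨b, hb, V₂, hV₂, S₂, hS₂c, hS₂1, hS₂⟩ :=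
    h₂ (ι₂ ⁻¹' U) ((Continuous.prodMk_right 1).continuousAt.preimage_mem_nhds hU)
  refine ⟨Fin.append (ι₁ ∘ a) (ι₂ ∘ b), Fin.addCases (by simpa using ha) (by simpa using hb),
    V₁ ×ˢ V₂, prod_mem_nhds hV₁ hV₂, fun g => Fin.append (ι₁ ∘ S₁ g.1) (ι₂ ∘ S₂ g.2), ?_, ?_, ?_⟩
  · have hι₁ : Continuous fun v : Fin N₁ → G₁ => ι₁ ∘ v :=
      continuous_pi fun i => (Continuous.prodMk_left 1).comp (continuous_apply i)
    have hι₂ : Continuous fun v : Fin N₂ → G₂ => ι₂ ∘ v :=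
      continuous_pi fun i => (Continuous.prodMk_right 1).comp (continuous_apply i)
    exact (Fin.continuous_append N₁ N₂).comp_continuousOn <|
      (hι₁.comp_continuousOn (hS₁c.comp continuousOn_fst fun _ hg => hg.1)).prodMk
        (hι₂.comp_continuousOn (hS₂c.comp continuousOn_snd fun _ hg => hg.2))
  · funext i
    refine Fin.addCases (fun i => ?_) (fun j => ?_) i <;> simp [hS₁1, hS₂1]
  · rintro ⟨g₁, g₂⟩ ⟨hg₁, hg₂⟩
    rw [List.prod_ofFn_commutatorElement_append]
    simp only [Function.comp_apply, ← map_prod_ofFn_commutatorElement, hS₁ g₁ hg₁, hS₂ g₂ hg₂]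
    simp [ι₁, ι₂]

/-- If `G₁` and `G₂` are topological groups having the local commutator decomposition
property with `N₁` and `N₂` commutators respectively, then the product group `G₁ × G₂`
has it with `N₁ + N₂` commutators. -/
theorem stmt_19 (G₁ G₂ : Type*) [Group G₁] [TopologicalSpace G₁] [IsTopologicalGroup G₁]
    [Group G₂] [TopologicalSpace G₂] [IsTopologicalGroup G₂] (N₁ N₂ : ℕ)
    (h₁ : LocallySmoothlyPerfect G₁ N₁) (h₂ : LocallySmoothlyPerfect G₂ N₂) :
    LocallySmoothlyPerfect (G₁ × G₂) (N₁ + N₂) :=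
  stmt_19_general G₁ G₂ N₁ N₂ h₁ h₂
end
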